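/- Fix an integer x ≥ 1, and define f : ℤ → ℕ by f(m) = 2 for all 1−x ≤ m ≤ 1 and f(m) = f(m−1) + f(m−x−1) for all m ≥ 2. Then for every m ≥ 1, the cardinality of the S-LOCO code SC(m,x) equals f(m). -/

import Mathlib

/-!
Split the admissible words of length `n + 2` according to whether their last two letters agree.
If they do, the last letter can be deleted, and conversely every word of `SC (n + 1) x` can be
extended by repeating its last letter. If they differ, the run ending at position `n` is followed
by another letter, so it has length more than `x` unless it is the first run: the letters at
positions `n - x, …, n` coincide. Such a word is therefore determined by its prefix of length
`n - x + 1`, which can be any word of `SC (n - x + 1) x` (the subtraction is truncated: for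
`n ≤ x` everything before the last letter is a single run and the prefix is one letter). This gives
`|SC (n + 2) x| = |SC (n + 1) x| + |SC (n - x + 1) x|`, the recurrence defining `f`.
-/

/-- The S-LOCO code: binary words of length `m` (position `m-1` most significant)
containing no contiguous subword of the form `0 1^j 0` or `1 0^j 1` with `1 ≤ j ≤ x`. -/
def SC (m x : ℕ) : Set (Fin m → Fin 2) :=
  {c | ¬ ∃ (i j : ℕ) (h : i + j + 1 < m), 1 ≤ j ∧ j ≤ x ∧
      ((c ⟨i + j + 1, h⟩ = 0 ∧ (∀ k (_ : 1 ≤ k) (_ : k ≤ j), c ⟨i + k, by omega⟩ = 1) ∧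
          c ⟨i, by omega⟩ = 0) ∨
       (c ⟨i + j + 1, h⟩ = 1 ∧ (∀ k (_ : 1 ≤ k) (_ : k ≤ j), c ⟨i + k, by omega⟩ = 0) ∧
          c ⟨i, by omega⟩ = 1))}

section

variable {m n p x : ℕ}

theorem mem_SC_iff {c : Fin m → Fin 2} :
    c ∈ SC m x ↔ ∀ i j (h : i + j + 1 < m), 1 ≤ j → j ≤ x →
      c ⟨i, by omega⟩ = c ⟨i + j + 1, h⟩ →
      ∃ k, ∃ (_ : 1 ≤ k) (_ : k ≤ j), c ⟨i + k, by omega⟩ = c ⟨i, by omega⟩ := by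
  simp only [SC, Set.mem_ofPred_eq, not_exists]
  refine forall₂_congr fun i j => forall_congr' fun h => ?_
  constructor
  · intro hno hj hjx heq
    by_contra! hall
    refine hno ⟨hj, hjx, ?_⟩
    obtain h0 | h1 : c ⟨i, by omega⟩ = 0 ∨ c ⟨i, by omega⟩ = 1 := by omega
    · exact .inl ⟨by omega, fun k hk hkj => by have := hall k hk hkj; omega, h0⟩
    · exact .inr ⟨by omega, fun k hk hkj => by have := hall k hk hkj; omega, h1⟩
  · rintro hall ⟨hj, hjx, ⟨htop, hmid, hbot⟩ | ⟨htop, hmid, hbot⟩⟩ <;>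
    · obtain ⟨k, hk, hkj, hck⟩ := hall hj hjx (hbot.trans htop.symm)
      have := hmid k hk hkj
      omega

theorem ncard_SC_one : (SC 1 x).ncard = 2 := by
  have : SC 1 x = Set.univ := by
    ext c
    simp only [SC, Set.mem_ofPred_eq, Set.mem_univ, iff_true]
    rintro ⟨i, j, h, hj, -⟩
    omega
  simp [this, Set.ncard_univ]

theorem comp_castLE_mem_SC {c : Fin m → Fin 2} (hc : c ∈ SC m x) (h : n ≤ m) :
    c ∘ Fin.castLE h ∈ SC n x := by
  rw [mem_SC_iff] at hc ⊢
  exact fun i j hij => hc i j (by omega)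

theorem eq_of_mem_SC_of_last_ne {w : Fin (n + 2) → Fin 2} (hw : w ∈ SC (n + 2) x)
    (hne : w (Fin.last (n + 1)) ≠ w ⟨n, by omega⟩) (a : ℕ) (hxa : n ≤ a + x) (han : a ≤ n) :
    w ⟨a, by omega⟩ = w ⟨n, by omega⟩ := by
  induction hd : n - a using Nat.strong_induction_on generalizing a with
  | _ d ih =>
    obtain rfl | han := eq_or_lt_of_le han
    · rfl
    by_contra hwa
    have hpat : w ⟨a, by omega⟩ = w ⟨a + (n - a) + 1, by omega⟩ := by
      have : w ⟨a + (n - a) + 1, by omega⟩ = w (Fin.last (n + 1)) :=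
        congrArg w (Fin.ext (by simp; omega))
      omega
    obtain ⟨k, hk, hkn, hwk⟩ :=
      mem_SC_iff.mp hw a (n - a) (by omega) (by omega) (by omega) hpat
    have := ih (n - (a + k)) (by omega) (a + k) (by omega) (by omega) rfl
    omega

def padLast (m : ℕ) (c : Fin (p + 1) → Fin 2) : Fin m → Fin 2 := fun i =>
  c ⟨min i p, by omega⟩

def padFlip (n : ℕ) (c : Fin (p + 1) → Fin 2) : Fin (n + 2) → Fin 2 := fun i =>
  if i.val = n + 1 then c (Fin.last p) + 1 else c ⟨min i p, by omega⟩

theorem padLast_of_le {c : Fin (p + 1) → Fin 2} {i : Fin m} (h : i.val ≤ p) :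
    padLast m c i = c ⟨i, by omega⟩ :=
  congrArg c (Fin.ext (min_eq_left h))

theorem padLast_of_ge {c : Fin (p + 1) → Fin 2} {i : Fin m} (h : p ≤ i.val) :
    padLast m c i = c (Fin.last p) :=
  congrArg c (Fin.ext (min_eq_right h))

theorem padFlip_of_le {c : Fin (p + 1) → Fin 2} {i : Fin (n + 2)} (h : i.val ≤ n) :
    padFlip n c i = padLast (n + 2) c i :=
  if_neg (by omega)

theorem padFlip_of_eq {c : Fin (p + 1) → Fin 2} {i : Fin (n + 2)} (h : i.val = n + 1) :
    padFlip n c i = c (Fin.last p) + 1 :=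
  if_pos h

theorem padLast_injective (h : p + 1 ≤ m) :
    Function.Injective (padLast m : (Fin (p + 1) → Fin 2) → Fin m → Fin 2) :=
  fun c d hcd => funext fun i => by
    have := congrFun hcd (Fin.castLE h i)
    rwa [padLast_of_le (by simp; omega), padLast_of_le (by simp; omega)] at this

theorem padFlip_injective (h : p ≤ n) :
    Function.Injective (padFlip n : (Fin (p + 1) → Fin 2) → Fin (n + 2) → Fin 2) :=
  fun c d hcd => funext fun i => by
    have := congrFun hcd (Fin.castLE (by omega) i)
    rwa [padFlip_of_le (by simp; omega), padFlip_of_le (by simp; omega),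
      padLast_of_le (by simp; omega), padLast_of_le (by simp; omega)] at this

theorem padLast_mem_SC {c : Fin (p + 1) → Fin 2} (hc : c ∈ SC (p + 1) x) :
    padLast m c ∈ SC m x := by
  rw [mem_SC_iff] at hc ⊢
  intro i j h hj hjx hij
  by_cases htop : i + j + 1 ≤ p
  · obtain ⟨k, hk, hkj, hck⟩ := hc i j (by omega) hj hjx
      (by simpa (disch := simp only [Fin.val_mk]; omega) only [padLast_of_le] using hij)
    exact ⟨k, hk, hkj,
      by simpa (disch := simp only [Fin.val_mk]; omega) only [padLast_of_le] using hck⟩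
  · refine ⟨j, hj, le_rfl, ?_⟩
    have : padLast m c ⟨i + j, by omega⟩ = padLast m c ⟨i + j + 1, h⟩ := by
      rw [padLast_of_ge (by simp; omega), padLast_of_ge (by simp; omega)]
    omega

theorem padFlip_mem_SC {c : Fin (n - x + 1) → Fin 2} (hc : c ∈ SC (n - x + 1) x) :
    padFlip n c ∈ SC (n + 2) x := by
  have hpad := mem_SC_iff.mp (padLast_mem_SC (m := n + 2) hc)
  rw [mem_SC_iff]
  intro i j h hj hjx hij
  by_cases htop : i + j + 1 = n + 1
  · have hi : padFlip n c ⟨i, by omega⟩ = c (Fin.last _) := by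
      rw [padFlip_of_le (by simp; omega), padLast_of_ge (by simp; omega)]
    have hlast : padFlip n c ⟨i + j + 1, h⟩ = c (Fin.last _) + 1 := padFlip_of_eq htop
    omega
  · obtain ⟨k, hk, hkj, hck⟩ := hpad i j h hj hjx
      (by simpa (disch := simp only [Fin.val_mk]; omega) only [padFlip_of_le] using hij)
    exact ⟨k, hk, hkj,
      by simpa (disch := simp only [Fin.val_mk]; omega) only [padFlip_of_le] using hck⟩

def lastTwoAgree (n : ℕ) : Set (Fin (n + 2) → Fin 2) :=
  {w | w (Fin.last (n + 1)) = w ⟨n, by omega⟩}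

theorem SC_inter_lastTwoAgree :
    SC (n + 2) x ∩ lastTwoAgree n = padLast (n + 2) '' SC (n + 1) x := by
  ext w
  constructor
  · rintro ⟨hw, hlast : w (Fin.last (n + 1)) = w ⟨n, _⟩⟩
    refine ⟨w ∘ Fin.castLE (by omega), comp_castLE_mem_SC hw _, funext fun ⟨a, ha⟩ => ?_⟩
    obtain rfl | ha := eq_or_lt_of_le (Nat.le_of_lt_succ ha)
    · rw [padLast_of_ge (by simp)]
      exact hlast.symm
    · rw [padLast_of_le (by simp; omega)]
      rfl
  · rintro ⟨c, hc, rfl⟩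
    exact ⟨padLast_mem_SC hc, by
      rw [lastTwoAgree, Set.mem_ofPred_eq, padLast_of_ge (by simp), padLast_of_ge (by simp)]⟩

theorem SC_diff_lastTwoAgree :
    SC (n + 2) x \ lastTwoAgree n = padFlip n '' SC (n - x + 1) x := by
  ext w
  constructor
  · rintro ⟨hw, hlast : w (Fin.last (n + 1)) ≠ w ⟨n, _⟩⟩
    have hrun := eq_of_mem_SC_of_last_ne hw hlast
    refine ⟨w ∘ Fin.castLE (by omega), comp_castLE_mem_SC hw _, funext fun ⟨a, ha⟩ => ?_⟩
    obtain rfl | ha := eq_or_lt_of_le (Nat.le_of_lt_succ ha)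
    · rw [padFlip_of_eq rfl]
      change w ⟨n - x, by omega⟩ + 1 = w (Fin.last (n + 1))
      have := hrun (n - x) (by omega) (by omega)
      omega
    · rw [padFlip_of_le (by simp; omega)]
      by_cases hax : a ≤ n - x
      · rw [padLast_of_le (by simp; omega)]
        rfl
      · rw [padLast_of_ge (by simp; omega)]
        exact (hrun (n - x) (by omega) (by omega)).trans (hrun a (by omega) (by omega)).symm
  · rintro ⟨c, hc, rfl⟩
    refine ⟨padFlip_mem_SC hc, fun hlast => ?_⟩
    rw [lastTwoAgree, Set.mem_ofPred_eq, padFlip_of_eq (by simp), padFlip_of_le (by simp),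
      padLast_of_ge (by simp)] at hlast
    omega

theorem ncard_SC_add_two :
    (SC (n + 2) x).ncard = (SC (n + 1) x).ncard + (SC (n - x + 1) x).ncard := by
  rw [← Set.ncard_inter_add_ncard_sdiff_eq_ncard (SC (n + 2) x) (lastTwoAgree n),
    SC_inter_lastTwoAgree, SC_diff_lastTwoAgree,
    Set.ncard_image_of_injective _ (padLast_injective (by omega)),
    Set.ncard_image_of_injective _ (padFlip_injective (by omega))]

end

theorem stmt2_general (x : ℕ) (f : ℤ → ℕ)
    (hbase : ∀ m : ℤ, 1 - (x : ℤ) ≤ m → m ≤ 1 → f m = 2)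
    (hrec : ∀ m : ℤ, 2 ≤ m → f m = f (m - 1) + f (m - x - 1)) :
    ∀ m : ℕ, 1 ≤ m → (SC m x).ncard = f m := by
  have hshift (n : ℕ) : f ((n + 2 : ℕ) - x - 1) = f (n - x + 1 : ℕ) := by
    rcases le_or_gt x n with h | h
    · congr 1
      push_cast [h]
      ring
    · rw [hbase _ (by omega) (by omega), hbase _ (by omega) (by omega)]
  intro m hm
  induction m using Nat.strong_induction_on with
  | _ m ih =>
    obtain _ | _ | n := m
    · omega
    · exact ncard_SC_one.trans (hbase 1 (by omega) le_rfl).symm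
    · rw [ncard_SC_add_two, ih (n + 1) (by omega) (by omega),
        ih (n - x + 1) (by omega) (by omega), hrec (n + 2 : ℕ) (by omega), hshift]
      congr 2
      push_cast
      ring

theorem stmt2 (x : ℕ) (hx : 1 ≤ x) (f : ℤ → ℕ)
    (hbase : ∀ m : ℤ, 1 - (x : ℤ) ≤ m → m ≤ 1 → f m = 2)
    (hrec : ∀ m : ℤ, 2 ≤ m → f m = f (m - 1) + f (m - x - 1)) :
    ∀ m : ℕ, 1 ≤ m → (SC m x).ncard = f m :=
  stmt2_general x f hbase hrec
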